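/- For any indices k and l (with s = dep l) and positive integer a, the alternating sum Σ_{j=0}^{s} (−1)^j [k // reverse(l₁,…,l_j); a] ∗ [l_{j+1},…,l_s] equals the concatenation symbol [k, a, l] in ℐ. -/

import Mathlib

/-- An index: a finite sequence of positive integers. -/
abbrev Idx := List ℕ+

/-- The `ℚ`-linear space `ℐ` spanned by formal symbols of indices. -/
abbrev IdxAlg := Idx →₀ ℚ

/-- Auxiliary harmonic product on indices *stored in reversed order*, so that the
recursion acts on the last components of the original indices, as in the paper:
`[k,k]∗[l,l] = [([k,k]∗[l]),l] + [([k]∗[l,l]),k] + [([k]∗[l]),k+l]`. -/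
noncomputable def hpAux : Idx → Idx → IdxAlg
  | [], l => Finsupp.single l 1
  | a :: as, [] => Finsupp.single (a :: as) 1
  | a :: as, b :: bs =>
      Finsupp.mapDomain (a :: ·) (hpAux as (b :: bs)) +
      Finsupp.mapDomain (b :: ·) (hpAux (a :: as) bs) +
      Finsupp.mapDomain ((a + b) :: ·) (hpAux as bs)
termination_by k l => k.length + l.length

/-- The harmonic (stuffle) product of two index symbols. -/
noncomputable def hp (k l : Idx) : IdxAlg :=
  Finsupp.mapDomain List.reverse (hpAux k.reverse l.reverse)

/-- The bilinear extension of the harmonic product to `ℐ`. -/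
noncomputable def hmul (u v : IdxAlg) : IdxAlg :=
  u.sum fun k ck => v.sum fun l cl => (ck * cl) • hp k l

/-- The star-sum `[l₁,…,l_s]^⋆`: the sum of all `[l₁□⋯□l_s]` with each `□` replaced by
`+` or `,`. -/
noncomputable def starSym : Idx → IdxAlg
  | [] => Finsupp.single [] 1
  | [a] => Finsupp.single [a] 1
  | a :: b :: rest =>
      Finsupp.mapDomain (a :: ·) (starSym (b :: rest)) + starSym ((a + b) :: rest)
termination_by l => l.length

/-- The linear map `S̃ : ℐ → ℐ` with `S̃([k]) = (−1)^{dep k}[k]^⋆`. -/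
noncomputable def Stilde (u : IdxAlg) : IdxAlg :=
  u.sum fun k c => ((-1 : ℚ) ^ k.length * c) • starSym k

/-- The defining properties of the anti-hook symbols `[k // l; a] ∈ ℐ`:
(1) `[(k)//∅; a] = [k,a]` and `[∅//(l); a] = [l,a]^⋆`;
(2) `[(k₁,…,k_{r−1})//(l); k_r] + [(k)//(l₁,…,l_{s−1}); l_s] = [k₁,…,k_r] ∗ [l₁,…,l_s]^⋆`
for nonempty `k`, `l`. -/
def IsAntiHook (AH : Idx → Idx → ℕ+ → IdxAlg) : Prop :=
  (∀ (k : Idx) (a : ℕ+), AH k [] a = Finsupp.single (k ++ [a]) 1) ∧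
  (∀ (l : Idx) (a : ℕ+), AH [] l a = starSym (l ++ [a])) ∧
  (∀ (k l : Idx) (a b : ℕ+),
    AH k (l ++ [b]) a + AH (k ++ [a]) l b =
      hmul (Finsupp.single (k ++ [a]) 1) (starSym (l ++ [b])))


/-!
Induction on `l`. For `l = (c, t)`, relation (2) turns the anti-hook of the `(i+1)`-st term into
`[k,a] ∗ [reverse(t₁,…,t_i), c]^⋆ − [k,a // reverse(t₁,…,t_i); c]`. The anti-hooks give the sum
for `(k,a)`, `t` and `c`, which is `[k,a,c,t]` by induction. By associativity of `∗` the other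
part is `[k,a] ∗ Σ_i (−1)^i [reverse(t₁,…,t_i), c]^⋆ ∗ [t_{i+1},…,t_{s−1}]`, an antipode-type
alternating sum that telescopes to `[c,t]`; it cancels the `j = 0` term `[k,a] ∗ [c,t]`.
-/

open Finsupp

lemma hpAux_nil_left (l : Idx) : hpAux [] l = single l 1 := by rw [hpAux]

lemma hpAux_nil_right (k : Idx) : hpAux k [] = single k 1 := by cases k <;> rw [hpAux]

lemma hpAux_cons_cons (a b : ℕ+) (k l : Idx) :
    hpAux (a :: k) (b :: l) =
      mapDomain (a :: ·) (hpAux k (b :: l)) + mapDomain (b :: ·) (hpAux (a :: k) l) +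
        mapDomain ((a + b) :: ·) (hpAux k l) := by
  rw [hpAux]

theorem hpAux_append_singleton (x y : ℕ+) : ∀ k l : Idx,
    hpAux (k ++ [x]) (l ++ [y]) =
      mapDomain (· ++ [x]) (hpAux k (l ++ [y])) + mapDomain (· ++ [y]) (hpAux (k ++ [x]) l) +
        mapDomain (· ++ [x + y]) (hpAux k l)
  | [], [] => by
    simp only [List.nil_append, hpAux_cons_cons, hpAux_nil_left, hpAux_nil_right,
      mapDomain_single, List.singleton_append]
    abel
  | [], b :: l => by
    have ih := hpAux_append_singleton x y [] l
    simp only [List.nil_append] at ih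
    simp only [List.nil_append, List.cons_append, hpAux_cons_cons, ih, hpAux_nil_left,
      mapDomain_add, mapDomain_single, ← mapDomain_comp, Function.comp_def, List.append_assoc]
    abel
  | a :: k, [] => by
    have ih := hpAux_append_singleton x y k []
    simp only [List.nil_append] at ih
    simp only [List.nil_append, List.cons_append, hpAux_cons_cons, ih, hpAux_nil_right,
      mapDomain_add, mapDomain_single, ← mapDomain_comp, Function.comp_def, List.append_assoc]
    abel
  | a :: k, b :: l => by
    have ih₁ := hpAux_append_singleton x y k (b :: l)
    have ih₂ := hpAux_append_singleton x y (a :: k) l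
    have ih₃ := hpAux_append_singleton x y k l
    simp only [List.cons_append] at ih₁ ih₂
    simp only [List.cons_append, hpAux_cons_cons, ih₁, ih₂, ih₃, mapDomain_add,
      ← mapDomain_comp, Function.comp_def]
    abel
termination_by k l => k.length + l.length

lemma hp_nil_left (l : Idx) : hp [] l = single l 1 := by
  simp [hp, hpAux_nil_left]

lemma hp_nil_right (k : Idx) : hp k [] = single k 1 := by
  simp [hp, hpAux_nil_right]

lemma hp_cons_cons (x y : ℕ+) (k l : Idx) :
    hp (x :: k) (y :: l) =
      mapDomain (x :: ·) (hp k (y :: l)) + mapDomain (y :: ·) (hp (x :: k) l) +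
        mapDomain ((x + y) :: ·) (hp k l) := by
  simp only [hp, List.reverse_cons, hpAux_append_singleton, mapDomain_add, ← mapDomain_comp,
    Function.comp_def, List.reverse_append, List.reverse_nil, List.nil_append,
    List.singleton_append]

noncomputable def hmulLinear : IdxAlg →ₗ[ℚ] IdxAlg →ₗ[ℚ] IdxAlg :=
  Finsupp.lsum ℚ fun k => LinearMap.toSpanSingleton ℚ (IdxAlg →ₗ[ℚ] IdxAlg)
    (Finsupp.lsum ℚ fun l => LinearMap.toSpanSingleton ℚ IdxAlg (hp k l))

lemma hmul_eq_hmulLinear (u v : IdxAlg) : hmul u v = hmulLinear u v := by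
  simp [hmul, hmulLinear, Finsupp.lsum_apply, LinearMap.finsupp_sum_apply, Finsupp.smul_sum,
    smul_smul]

lemma hmul_single_single (k l : Idx) (c d : ℚ) :
    hmul (single k c) (single l d) = (c * d) • hp k l := by
  simp [hmul_eq_hmulLinear, hmulLinear, smul_smul]

lemma hmul_add_left (u v w : IdxAlg) : hmul (u + v) w = hmul u w + hmul v w := by
  simp [hmul_eq_hmulLinear]

lemma hmul_add_right (u v w : IdxAlg) : hmul u (v + w) = hmul u v + hmul u w := by
  simp [hmul_eq_hmulLinear]

lemma hmul_sub_left (u v w : IdxAlg) : hmul (u - v) w = hmul u w - hmul v w := by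
  simp [hmul_eq_hmulLinear]

lemma hmul_smul_left (c : ℚ) (u v : IdxAlg) : hmul (c • u) v = c • hmul u v := by
  simp [hmul_eq_hmulLinear]

lemma hmul_smul_right (c : ℚ) (u v : IdxAlg) : hmul u (c • v) = c • hmul u v := by
  simp [hmul_eq_hmulLinear]

lemma hmul_zero_left (v : IdxAlg) : hmul 0 v = 0 := by simp [hmul_eq_hmulLinear]

lemma hmul_zero_right (u : IdxAlg) : hmul u 0 = 0 := by simp [hmul_eq_hmulLinear]

lemma hmul_sum_right {ι : Type*} (u : IdxAlg) (s : Finset ι) (f : ι → IdxAlg) :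
    hmul u (∑ i ∈ s, f i) = ∑ i ∈ s, hmul u (f i) := by
  simp [hmul_eq_hmulLinear]

lemma hmul_single_one_single_one (k l : Idx) : hmul (single k 1) (single l 1) = hp k l := by
  simp [hmul_single_single]

lemma hmul_nil_left (v : IdxAlg) : hmul (single [] 1) v = v := by
  induction v using Finsupp.induction_linear with
  | zero => exact hmul_zero_right _
  | add f g hf hg => rw [hmul_add_right, hf, hg]
  | single l b => simp [hmul_single_single, hp_nil_left]

lemma hmul_nil_right (u : IdxAlg) : hmul u (single [] 1) = u := by
  induction u using Finsupp.induction_linear with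
  | zero => exact hmul_zero_left _
  | add f g hf hg => rw [hmul_add_left, hf, hg]
  | single k b => simp [hmul_single_single, hp_nil_right]

lemma hmul_mapDomain_cons_cons (x y : ℕ+) (u v : IdxAlg) :
    hmul (mapDomain (x :: ·) u) (mapDomain (y :: ·) v) =
      mapDomain (x :: ·) (hmul u (mapDomain (y :: ·) v)) +
        mapDomain (y :: ·) (hmul (mapDomain (x :: ·) u) v) +
        mapDomain ((x + y) :: ·) (hmul u v) := by
  induction u using Finsupp.induction_linear with
  | zero => simp [hmul_zero_left]
  | add f g hf hg =>
    simp only [mapDomain_add, hmul_add_left, hf, hg]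
    abel
  | single k b =>
    induction v using Finsupp.induction_linear with
    | zero => simp [hmul_zero_right]
    | add f g hf hg =>
      simp only [mapDomain_add, hmul_add_right, hf, hg]
      abel
    | single l c =>
      simp only [mapDomain_single, hmul_single_single, hp_cons_cons, smul_add, mapDomain_smul]

lemma hmul_hp_cons_cons_single_cons (x y z : ℕ+) (k l m : Idx) :
    hmul (hp (x :: k) (y :: l)) (single (z :: m) 1) =
      mapDomain (x :: ·) (hmul (hp k (y :: l)) (single (z :: m) 1)) +
      mapDomain (y :: ·) (hmul (hp (x :: k) l) (single (z :: m) 1)) +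
      mapDomain ((x + y) :: ·) (hmul (hp k l) (single (z :: m) 1)) +
      mapDomain (z :: ·) (hmul (hp (x :: k) (y :: l)) (single m 1)) +
      mapDomain ((x + z) :: ·) (hmul (hp k (y :: l)) (single m 1)) +
      mapDomain ((y + z) :: ·) (hmul (hp (x :: k) l) (single m 1)) +
      mapDomain ((x + y + z) :: ·) (hmul (hp k l) (single m 1)) := by
  have hz : single (z :: m) (1 : ℚ) = mapDomain (z :: ·) (single m 1) := mapDomain_single.symm
  conv_lhs => rw [hp_cons_cons, hz]
  conv_rhs => rw [hp_cons_cons x y, hz]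
  simp only [hmul_add_left, hmul_mapDomain_cons_cons, mapDomain_add]
  abel

lemma hmul_single_cons_hp_cons_cons (x y z : ℕ+) (k l m : Idx) :
    hmul (single (x :: k) 1) (hp (y :: l) (z :: m)) =
      mapDomain (x :: ·) (hmul (single k 1) (hp (y :: l) (z :: m))) +
      mapDomain (y :: ·) (hmul (single (x :: k) 1) (hp l (z :: m))) +
      mapDomain ((x + y) :: ·) (hmul (single k 1) (hp l (z :: m))) +
      mapDomain (z :: ·) (hmul (single (x :: k) 1) (hp (y :: l) m)) +
      mapDomain ((x + z) :: ·) (hmul (single k 1) (hp (y :: l) m)) +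
      mapDomain ((y + z) :: ·) (hmul (single (x :: k) 1) (hp l m)) +
      mapDomain ((x + y + z) :: ·) (hmul (single k 1) (hp l m)) := by
  have hx : single (x :: k) (1 : ℚ) = mapDomain (x :: ·) (single k 1) := mapDomain_single.symm
  conv_lhs => rw [hp_cons_cons, hx]
  conv_rhs => rw [hp_cons_cons y z, hx]
  simp only [hmul_add_right, hmul_mapDomain_cons_cons, mapDomain_add, add_assoc]
  abel

theorem hmul_hp_single_assoc (k l m : Idx) :
    hmul (hp k l) (single m 1) = hmul (single k 1) (hp l m) :=
  match k, l, m with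
  | [], l, m => by rw [hp_nil_left, hmul_single_one_single_one, hmul_nil_left]
  | _ :: _, [], m => by rw [hp_nil_right, hp_nil_left]
  | _ :: _, _ :: _, [] => by rw [hmul_nil_right, hp_nil_right, hmul_single_one_single_one]
  | x :: k, y :: l, z :: m => by
    rw [hmul_hp_cons_cons_single_cons, hmul_single_cons_hp_cons_cons,
      hmul_hp_single_assoc k (y :: l) (z :: m), hmul_hp_single_assoc (x :: k) l (z :: m),
      hmul_hp_single_assoc k l (z :: m), hmul_hp_single_assoc (x :: k) (y :: l) m,
      hmul_hp_single_assoc k (y :: l) m, hmul_hp_single_assoc (x :: k) l m,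
      hmul_hp_single_assoc k l m]
termination_by k.length + l.length + m.length

theorem hmul_assoc (u v w : IdxAlg) : hmul (hmul u v) w = hmul u (hmul v w) := by
  induction u using Finsupp.induction_linear with
  | zero => simp only [hmul_zero_left]
  | add f g hf hg => rw [hmul_add_left, hmul_add_left, hmul_add_left, hf, hg]
  | single k a =>
    induction v using Finsupp.induction_linear with
    | zero => simp only [hmul_zero_left, hmul_zero_right]
    | add f g hf hg => rw [hmul_add_right, hmul_add_left, hmul_add_left, hmul_add_right, hf, hg]
    | single l b =>
      induction w using Finsupp.induction_linear with
      | zero => simp only [hmul_zero_right]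
      | add f g hf hg => rw [hmul_add_right, hmul_add_right, hmul_add_right, hf, hg]
      | single m c =>
        rw [← smul_single_one k a, ← smul_single_one l b, ← smul_single_one m c]
        simp only [hmul_smul_left, hmul_smul_right, hmul_single_one_single_one,
          hmul_hp_single_assoc, smul_smul]
        ring_nf

lemma starSym_nil : starSym [] = single [] 1 := by rw [starSym]

lemma starSym_singleton (a : ℕ+) : starSym [a] = single [a] 1 := by rw [starSym]

lemma starSym_cons_cons (a b : ℕ+) (r : Idx) :
    starSym (a :: b :: r) = mapDomain (a :: ·) (starSym (b :: r)) + starSym ((a + b) :: r) := by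
  rw [starSym]

/-- The terms of `[r]^⋆ ∗ [l]` whose first entry is the first entry of a term of `[r]^⋆`,
not merged with `l₁`. -/
noncomputable def starSymHeadMul : Idx → Idx → IdxAlg
  | [], [] => single [] 1
  | [], _ :: _ => 0
  | [x], l => single (x :: l) 1
  | x :: y :: r, l =>
      mapDomain (x :: ·) (hmul (starSym (y :: r)) (single l 1)) + starSymHeadMul ((x + y) :: r) l
termination_by r => r.length

lemma starSymHeadMul_singleton (x : ℕ+) (l : Idx) : starSymHeadMul [x] l = single (x :: l) 1 := by
  rw [starSymHeadMul]

lemma starSymHeadMul_cons_cons (x y : ℕ+) (r l : Idx) :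
    starSymHeadMul (x :: y :: r) l =
      mapDomain (x :: ·) (hmul (starSym (y :: r)) (single l 1)) +
        starSymHeadMul ((x + y) :: r) l := by
  rw [starSymHeadMul]

theorem starSymHeadMul_nil_right : ∀ r : Idx, starSymHeadMul r [] = starSym r
  | [] => by rw [starSymHeadMul, starSym_nil]
  | [x] => by rw [starSymHeadMul_singleton, starSym_singleton]
  | x :: y :: r => by
    rw [starSymHeadMul_cons_cons, starSym_cons_cons, hmul_nil_right,
      starSymHeadMul_nil_right ((x + y) :: r)]
termination_by r => r.length

theorem hmul_starSym_single_cons (c : ℕ+) (t : Idx) : ∀ r : Idx,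
    hmul (starSym r) (single (c :: t) 1) = starSymHeadMul r (c :: t) + starSymHeadMul (c :: r) t
  | [] => by
    rw [starSym_nil, hmul_nil_left, starSymHeadMul, starSymHeadMul_singleton, zero_add]
  | [x] => by
    rw [starSym_singleton, hmul_single_one_single_one, hp_cons_cons, starSymHeadMul_singleton,
      starSymHeadMul_cons_cons, starSymHeadMul_singleton, starSym_singleton,
      hmul_single_one_single_one, hp_nil_left, hp_nil_left, add_comm x c]
    simp only [mapDomain_single]
    abel
  | x :: y :: r => by
    have hc : single (c :: t) (1 : ℚ) = mapDomain (c :: ·) (single t 1) := mapDomain_single.symm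
    rw [starSym_cons_cons x y r, hmul_add_left, hmul_starSym_single_cons c t ((x + y) :: r),
      starSymHeadMul_cons_cons x y, starSymHeadMul_cons_cons c x, starSymHeadMul_cons_cons (c + x),
      starSymHeadMul_cons_cons c (x + y), starSym_cons_cons x y r, hc, hmul_mapDomain_cons_cons,
      ← hc]
    simp only [hmul_add_left, mapDomain_add, ← add_assoc, add_comm x c]
    abel
termination_by r => r.length

lemma alternating_sum_take_drop_cons (f : Idx → Idx → IdxAlg) (c : ℕ+) (t : Idx) :
    ∑ j ∈ Finset.range ((c :: t).length + 1),
        ((-1 : ℚ) ^ j) • f ((c :: t).take j).reverse ((c :: t).drop j) =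
      f [] (c :: t) - ∑ i ∈ Finset.range (t.length + 1),
        ((-1 : ℚ) ^ i) • f ((t.take i).reverse ++ [c]) (t.drop i) := by
  rw [List.length_cons, Finset.sum_range_succ', sub_eq_neg_add, ← Finset.sum_neg_distrib]
  simp [pow_succ]

/-- The alternating sum telescopes: by `hmul_starSym_single_cons`, its `j`-th term is the sum
of the `j`-th and `(j+1)`-st values of `starSymHeadMul` along the splitting of `l`. -/
theorem alternating_sum_starSym_hmul : ∀ l r : Idx,
    ∑ j ∈ Finset.range (l.length + 1),
        ((-1 : ℚ) ^ j) • hmul (starSym ((l.take j).reverse ++ r)) (single (l.drop j) 1) =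
      starSymHeadMul r l
  | [], r => by simp [hmul_nil_right, starSymHeadMul_nil_right]
  | c :: t, r => by
    rw [alternating_sum_take_drop_cons (fun p q => hmul (starSym (p ++ r)) (single q 1))]
    simp only [List.append_assoc, List.singleton_append, alternating_sum_starSym_hmul t (c :: r),
      List.nil_append, hmul_starSym_single_cons]
    abel

lemma alternating_sum_starSym_append_singleton_hmul (c : ℕ+) (t : Idx) :
    ∑ i ∈ Finset.range (t.length + 1),
        ((-1 : ℚ) ^ i) • hmul (starSym ((t.take i).reverse ++ [c])) (single (t.drop i) 1) =
      single (c :: t) 1 := by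
  rw [alternating_sum_starSym_hmul, starSymHeadMul_singleton]

/-- For indices `k`, `l = (l₁,…,l_s)` and a positive integer `a`,
`Σ_{j=0}^{s} (−1)^j [k // reverse(l₁,…,l_j); a] ∗ [l_{j+1},…,l_s] = [k,a,l]` in `ℐ`. -/
theorem alternating_antiHook_sum_eq_concat (AH : Idx → Idx → ℕ+ → IdxAlg)
    (hAH : IsAntiHook AH) (k l : Idx) (a : ℕ+) :
    ∑ j ∈ Finset.range (l.length + 1),
        ((-1 : ℚ) ^ j) • hmul (AH k (l.take j).reverse a) (Finsupp.single (l.drop j) 1) =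
      Finsupp.single (k ++ [a] ++ l) 1 := by
  obtain ⟨hAH_right_nil, -, hAH_rec⟩ := hAH
  induction l generalizing k a with
  | nil => simp [hAH_right_nil, hmul_nil_right]
  | cons c t ih =>
    have hAH_split (p : Idx) : AH k (p ++ [c]) a =
        hmul (single (k ++ [a]) 1) (starSym (p ++ [c])) - AH (k ++ [a]) p c :=
      eq_sub_of_add_eq (hAH_rec k p a c)
    have hstar : ∑ i ∈ Finset.range (t.length + 1), ((-1 : ℚ) ^ i) •
        hmul (hmul (single (k ++ [a]) 1) (starSym ((t.take i).reverse ++ [c])))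
          (single (t.drop i) 1) = hmul (single (k ++ [a]) 1) (single (c :: t) 1) := by
      rw [← alternating_sum_starSym_append_singleton_hmul c t, hmul_sum_right]
      simp only [hmul_assoc, hmul_smul_right]
    rw [alternating_sum_take_drop_cons (fun p q => hmul (AH k p a) (single q 1))]
    simp only [hAH_split, hmul_sub_left, smul_sub, Finset.sum_sub_distrib, hstar, ih,
      hAH_right_nil, sub_sub_cancel]
    simp
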